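/- arXiv:2203.10656 — 5 statements merged into one kernel-verified Lean document; each statement's English description precedes it below -/
import Mathlib

section
/- If w : (0,∞) → ℝ is a twice differentiable solution of w''(t)·w(t)³·(w(t)+(1-t)w'(t))^(n-2) = c, and w̃(t) := t·w(1/t), then w̃ also satisfies w̃''(t)·w̃(t)³·(w̃(t)+(1-t)w̃'(t))^(n-2) = c. -/
open Real Set

/-- If `w` is a twice differentiable solution on `(0,∞)` of
`w'' w³ (w + (1-t) w')^(n-2) = c`, and `w̃ t = t * w (1/t)`, then `w̃` satisfies
the same ODE. -/
theorem stmt1 (n : ℕ) (hn : 2 ≤ n) (c : ℝ) (w : ℝ → ℝ)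
    (hdiff : ∀ t ∈ Ioi (0:ℝ), DifferentiableAt ℝ w t ∧ DifferentiableAt ℝ (deriv w) t)
    (hode : ∀ t ∈ Ioi (0:ℝ),
      deriv (deriv w) t * (w t) ^ 3 * (w t + (1 - t) * deriv w t) ^ (n - 2) = c)
    (wt : ℝ → ℝ) (hwt : ∀ t, wt t = t * w (1 / t)) :
    ∀ t ∈ Ioi (0:ℝ),
      deriv (deriv wt) t * (wt t) ^ 3 * (wt t + (1 - t) * deriv wt t) ^ (n - 2) = c := by
  have key : ∀ s ∈ Ioi (0:ℝ), HasDerivAt wt (w (1/s) - (1/s) * deriv w (1/s)) s := by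
    intro s hs
    have hs0 : (0:ℝ) < s := hs
    have hsne : s ≠ 0 := hs0.ne'
    have hI : HasDerivAt (fun x : ℝ => 1/x) (-(1/s^2)) s := by
      simpa [one_div] using hasDerivAt_inv hsne
    have hw1 := (hdiff (1/s) (mem_Ioi.mpr (by positivity))).1
    have hc : HasDerivAt (fun x : ℝ => w (1/x)) (deriv w (1/s) * (-(1/s^2))) s :=
      hw1.hasDerivAt.comp s hI
    have hm := (hasDerivAt_id s).mul hc
    have heq : (id * fun x : ℝ => w (1/x)) = wt := by
      funext x; rw [hwt]; rfl
    rw [heq] at hm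
    refine hm.congr_deriv ?_
    simp only [id_eq]
    field_simp
    ring
  intro t ht
  have ht0 : (0:ℝ) < t := ht
  have htne : t ≠ 0 := ht0.ne'
  have hinvpos : (0:ℝ) < 1/t := by positivity
  obtain ⟨hw1, hw2⟩ := hdiff (1/t) hinvpos
  have hderiv1 : ∀ s ∈ Ioi (0:ℝ), deriv wt s = w (1/s) - (1/s) * deriv w (1/s) :=
    fun s hs => (key s hs).deriv
  have hI : HasDerivAt (fun x : ℝ => 1/x) (-(1/t^2)) t := by
    simpa [one_div] using hasDerivAt_inv htne
  have h1 : HasDerivAt (fun x : ℝ => w (1/x)) (deriv w (1/t) * (-(1/t^2))) t :=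
    hw1.hasDerivAt.comp t hI
  have h2 : HasDerivAt (fun x : ℝ => deriv w (1/x)) (deriv (deriv w) (1/t) * (-(1/t^2))) t :=
    hw2.hasDerivAt.comp t hI
  have h3 : HasDerivAt (fun x : ℝ => (1/x) * deriv w (1/x))
      (-(1/t^2) * deriv w (1/t) + (1/t) * (deriv (deriv w) (1/t) * (-(1/t^2)))) t :=
    hI.mul h2
  have h4 := h1.sub h3
  have heq : deriv wt =ᶠ[nhds t] (fun x : ℝ => w (1/x) - (1/x) * deriv w (1/x)) := by
    filter_upwards [Ioi_mem_nhds ht0] with s hs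
    exact hderiv1 s hs
  have key2 : HasDerivAt (deriv wt) ((1/t^3) * deriv (deriv w) (1/t)) t := by
    have h5 := h4.congr_of_eventuallyEq heq
    refine h5.congr_deriv ?_
    field_simp
    ring
  rw [key2.deriv, hderiv1 t ht, hwt t]
  have hb : t * w (1/t) + (1-t) * (w (1/t) - (1/t) * deriv w (1/t))
      = w (1/t) + (1 - 1/t) * deriv w (1/t) := by
    field_simp
    ring
  rw [hb]
  have hc3 : 1/t^3 * deriv (deriv w) (1/t) * (t * w (1/t))^3
      = deriv (deriv w) (1/t) * (w (1/t))^3 := by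
    field_simp
  rw [hc3]
  exact hode (1/t) hinvpos
end

section
/- If v : (0,∞) → ℝ is twice differentiable and ṽ(t) := t^((n+2)/n) · v(1/t), then (n+2)·ṽ(t)·ṽ''(t) - 2·ṽ'(t)² = t^(4/n - 2) · ((n+2)·v(1/t)·v''(1/t) - 2·v'(1/t)²). -/
open Real Set

/-- If `v` is twice differentiable on `(0,∞)` and
`ṽ t = t^((n+2)/n) * v (1/t)`, then
`(n+2) ṽ ṽ'' - 2 ṽ'² = t^(4/n - 2) ((n+2) v(1/t) v''(1/t) - 2 v'(1/t)²)`. -/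
theorem stmt2 (n : ℕ) (hn : 1 ≤ n) (v : ℝ → ℝ)
    (hdiff : ∀ t ∈ Ioi (0:ℝ), DifferentiableAt ℝ v t ∧ DifferentiableAt ℝ (deriv v) t)
    (vt : ℝ → ℝ) (hvt : ∀ t, vt t = t ^ (((n:ℝ) + 2) / n) * v (1 / t)) :
    ∀ t ∈ Ioi (0:ℝ),
      ((n:ℝ) + 2) * vt t * deriv (deriv vt) t - 2 * (deriv vt t) ^ 2 =
        t ^ ((4:ℝ) / n - 2) *
          (((n:ℝ) + 2) * v (1 / t) * deriv (deriv v) (1 / t) - 2 * (deriv v (1 / t)) ^ 2) := by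
  intro t ht
  have ht0 : (0:ℝ) < t := ht
  have htne : t ≠ 0 := ne_of_gt ht0
  have hn0 : (n:ℝ) ≠ 0 := by
    have : (1:ℝ) ≤ (n:ℝ) := by exact_mod_cast hn
    linarith
  set α : ℝ := ((n:ℝ)+2)/n with hα
  have hvteq : vt = fun s => s ^ α * v (1/s) := funext hvt
  set A : ℝ → ℝ := fun s => α * s ^ (α-1) * v (1/s) +
      s ^ α * (deriv v (1/s) * -(s^2)⁻¹) with hAdef
  have hA : ∀ s : ℝ, 0 < s → HasDerivAt vt (A s) s := by
    intro s hs
    have hsne : s ≠ 0 := ne_of_gt hs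
    have hinv : HasDerivAt (fun x : ℝ => 1/x) (-(s^2)⁻¹) s := by
      simpa [one_div] using hasDerivAt_inv hsne
    have h1 : HasDerivAt (fun x : ℝ => x ^ α) (α * s ^ (α-1)) s :=
      Real.hasDerivAt_rpow_const (Or.inl hsne)
    have hmem : 1/s ∈ Ioi (0:ℝ) := by simp [one_div, hs]
    have h2 : HasDerivAt (fun x : ℝ => v (1/x)) (deriv v (1/s) * -(s^2)⁻¹) s :=
      ((hdiff _ hmem).1.hasDerivAt).comp s hinv
    rw [hvteq]
    exact h1.mul h2
  have hev : deriv vt =ᶠ[nhds t] A := by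
    filter_upwards [Ioi_mem_nhds ht0] with s hs
    exact (hA s hs).deriv
  have hderiv1 : deriv vt t = A t := (hA t ht0).deriv
  have hmem : 1/t ∈ Ioi (0:ℝ) := by simp [one_div, ht0]
  have hinv : HasDerivAt (fun x : ℝ => 1/x) (-(t^2)⁻¹) t := by
    simpa [one_div] using hasDerivAt_inv htne
  have h1 : HasDerivAt (fun x : ℝ => x ^ (α-1)) ((α-1) * t ^ (α-1-1)) t :=
    Real.hasDerivAt_rpow_const (Or.inl htne)
  have h1' : HasDerivAt (fun x : ℝ => x ^ α) (α * t ^ (α-1)) t :=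
    Real.hasDerivAt_rpow_const (Or.inl htne)
  have h2 : HasDerivAt (fun x : ℝ => v (1/x)) (deriv v (1/t) * -(t^2)⁻¹) t :=
    ((hdiff _ hmem).1.hasDerivAt).comp t hinv
  have h3 : HasDerivAt (fun x : ℝ => deriv v (1/x)) (deriv (deriv v) (1/t) * -(t^2)⁻¹) t :=
    ((hdiff _ hmem).2.hasDerivAt).comp t hinv
  have hsq : HasDerivAt (fun x : ℝ => x^2) ((2:ℕ) * t ^ (2-1)) t := hasDerivAt_pow 2 t
  have hq : HasDerivAt (fun x : ℝ => -(x^2)⁻¹) (-(-((2:ℕ) * t ^ (2-1)) / (t^2)^2)) t :=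
    (hsq.inv (by positivity)).neg
  have hB : HasDerivAt A
      ((α * ((α-1) * t ^ (α-1-1))) * v (1/t) + (α * t ^ (α-1)) * (deriv v (1/t) * -(t^2)⁻¹)
        + ((α * t ^ (α-1)) * (deriv v (1/t) * -(t^2)⁻¹)
          + t ^ α * ((deriv (deriv v) (1/t) * -(t^2)⁻¹) * -(t^2)⁻¹
            + deriv v (1/t) * -(-((2:ℕ) * t ^ (2-1)) / (t^2)^2)))) t := by
    exact ((h1.const_mul α).mul h2).add (h1'.mul (h3.mul hq))
  have hderiv2 : deriv (deriv vt) t = deriv A t := Filter.EventuallyEq.deriv_eq hev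
  rw [hderiv1, hderiv2, hB.deriv, hvteq]
  -- now pure algebra
  set w : ℝ := t ^ ((2:ℝ)/(n:ℝ)) with hw
  have hwpos : 0 < w := Real.rpow_pos_of_pos ht0 _
  have e1 : t ^ α = t * w := by
    rw [hα, show ((n:ℝ)+2)/n = 1 + 2/n by field_simp, Real.rpow_add ht0, Real.rpow_one, hw]
  have e2 : t ^ (α-1) = w := by
    rw [hα, show ((n:ℝ)+2)/n - 1 = 2/n by field_simp; ring, hw]
  have e3 : t ^ (α-1-1) = w / t := by
    rw [hα, show ((n:ℝ)+2)/n - 1 - 1 = 2/n - 1 by field_simp; ring,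
      Real.rpow_sub ht0, Real.rpow_one, hw]
  have e4 : t ^ ((4:ℝ)/n - 2) = w^2 / t^2 := by
    rw [show ((4:ℝ)/n - 2) = (2/n + 2/n) - 2 by ring, Real.rpow_sub ht0,
      Real.rpow_add ht0, ← hw]
    rw [show ((2:ℝ)) = ((2:ℕ):ℝ) by norm_num, Real.rpow_natCast]
    ring
  simp only [hAdef]
  rw [e1, e2, e3, e4, hα]
  field_simp
  ring
end

section
/- Suppose 𝔴 : [1,∞) → ℝ is increasing, convex, positive, satisfies ((n-1)/n)·(𝔴')^n + 1/(2𝔴²) = 1/(2w₀²), 𝔴(1) = w₀ > 0, and 𝔴(s) → ∞ as s → ∞. Then 𝔴'(s) → p* := (n/(2(n-1)w₀²))^(1/n) as s → ∞, and 𝔴'([1,∞)) = [0, p*). -/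
/-!
The first integral gives `(𝔴')ⁿ = n/(n-1) · (1/(2w₀²) - 1/(2𝔴²))`, and `𝔴' ≥ 0` by monotonicity,
so `𝔴' = σ(𝔴)` for an explicit continuous `σ` that vanishes at `w₀`, stays below `p*` on
`[w₀, ∞)` and tends to `p*` at infinity. Since `𝔴 → ∞`, this gives `𝔴' → p*`; and `𝔴'` is
continuous on the connected set `[1, ∞)`, so its image is an interval containing `𝔴'(1) = 0`
and values arbitrarily close to `p*` but never `p*` itself.
-/

open Real Set Filter Topology

lemma HasDerivAt.nonneg_of_monotoneOn_Ici {f : ℝ → ℝ} {f' a x : ℝ} (hx : x ∈ Ici a)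
    (hd : HasDerivAt f f' x) (hf : MonotoneOn f (Ici a)) : 0 ≤ f' := by
  have hacc : AccPt x (𝓟 (Ici x)) := by
    rw [accPt_principal_iff_nhdsWithin, Ici_sdiff_left]
    infer_instance
  exact hd.hasDerivWithinAt.nonneg_of_monotoneOn hacc (hf.mono (Ici_subset_Ici.mpr hx))

lemma image_Ici_eq_Ico_of_tendsto {f : ℝ → ℝ} {a l : ℝ} (hf : ContinuousOn f (Ici a))
    (hmin : ∀ s ∈ Ici a, f a ≤ f s) (hlt : ∀ s ∈ Ici a, f s < l)
    (hl : Tendsto f atTop (𝓝 l)) : f '' Ici a = Ico (f a) l := by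
  refine Subset.antisymm ?_ fun y hy => ?_
  · rintro _ ⟨s, hs, rfl⟩
    exact ⟨hmin s hs, hlt s hs⟩
  obtain ⟨s, hys, hs⟩ :=
    ((hl.eventually (eventually_gt_nhds hy.2)).and (eventually_ge_atTop a)).exists
  exact (isPreconnected_Ici.image f hf).Icc_subset (mem_image_of_mem f self_mem_Ici)
    (mem_image_of_mem f hs) ⟨hy.1, hys.le⟩

section FirstIntegral

variable {n : ℕ} {w₀ w : ℝ}

/-- The slope `𝔴'` that the first integral forces at a point where `𝔴` takes the value `w`. -/
noncomputable def firstIntegralSlope (n : ℕ) (w₀ w : ℝ) : ℝ :=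
  ((n : ℝ) / ((n : ℝ) - 1) * (1 / (2 * w₀ ^ 2) - 1 / (2 * w ^ 2))) ^ (1 / (n : ℝ))

lemma eq_firstIntegralSlope {p : ℝ} (hn : 1 < n) (hp : 0 ≤ p)
    (h : ((n : ℝ) - 1) / n * p ^ n + 1 / (2 * w ^ 2) = 1 / (2 * w₀ ^ 2)) :
    p = firstIntegralSlope n w₀ w := by
  have hn' : (1 : ℝ) < n := by exact_mod_cast hn
  have hpow : p ^ n = (n : ℝ) / ((n : ℝ) - 1) * (1 / (2 * w₀ ^ 2) - 1 / (2 * w ^ 2)) := by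
    rw [← h]
    field_simp [(by linarith : (n : ℝ) - 1 ≠ 0)]
    ring
  rw [firstIntegralSlope, ← hpow, one_div, pow_rpow_inv_natCast hp (by omega)]

lemma firstIntegralSlope_self (hn : n ≠ 0) : firstIntegralSlope n w₀ w₀ = 0 := by
  rw [firstIntegralSlope, sub_self, mul_zero, zero_rpow (by positivity)]

noncomputable def limitingSlope (n : ℕ) (w₀ : ℝ) : ℝ :=
  ((n : ℝ) / (2 * ((n : ℝ) - 1) * w₀ ^ 2)) ^ (1 / (n : ℝ))

lemma limitingSlope_eq (n : ℕ) (w₀ : ℝ) :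
    limitingSlope n w₀ = ((n : ℝ) / ((n : ℝ) - 1) * (1 / (2 * w₀ ^ 2))) ^ (1 / (n : ℝ)) := by
  rw [limitingSlope, div_mul_div_comm, mul_one]
  ring_nf

lemma firstIntegralSlope_lt (hn : 1 < n) (hw₀ : 0 < w₀) (hw : w₀ ≤ w) :
    firstIntegralSlope n w₀ w < limitingSlope n w₀ := by
  have hn' : (1 : ℝ) < n := by exact_mod_cast hn
  have hw_pos : 0 < w := hw₀.trans_le hw
  have hbase : 0 ≤ 1 / (2 * w₀ ^ 2) - 1 / (2 * w ^ 2) :=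
    sub_nonneg.mpr (one_div_le_one_div_of_le (by positivity) (by gcongr))
  have hfactor : 0 < (n : ℝ) / ((n : ℝ) - 1) := div_pos (by linarith) (by linarith)
  rw [firstIntegralSlope, limitingSlope_eq]
  refine rpow_lt_rpow (mul_nonneg hfactor.le hbase) ?_ (by positivity)
  gcongr
  exact sub_lt_self _ (by positivity)

lemma tendsto_firstIntegralSlope (hn : 1 < n) (hw₀ : w₀ ≠ 0) :
    Tendsto (firstIntegralSlope n w₀) atTop (𝓝 (limitingSlope n w₀)) := by
  have hn' : (1 : ℝ) < n := by exact_mod_cast hn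
  have hinv : Tendsto (fun w : ℝ => 1 / (2 * w ^ 2)) atTop (𝓝 0) := by
    simp only [one_div]
    exact ((tendsto_pow_atTop two_ne_zero).const_mul_atTop two_pos).inv_tendsto_atTop
  have hinner := ((tendsto_const_nhds (x := 1 / (2 * w₀ ^ 2))).sub hinv).const_mul
    ((n : ℝ) / ((n : ℝ) - 1))
  rw [sub_zero] at hinner
  rw [limitingSlope_eq]
  exact hinner.rpow_const
    (Or.inl (mul_pos (div_pos (by linarith) (by linarith)) (by positivity)).ne')

lemma continuousAt_firstIntegralSlope (hn : n ≠ 0) (hw : w ≠ 0) :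
    ContinuousAt (firstIntegralSlope n w₀) w := by
  have hinner : ContinuousAt
      (fun v : ℝ => (n : ℝ) / ((n : ℝ) - 1) * (1 / (2 * w₀ ^ 2) - 1 / (2 * v ^ 2))) w :=
    continuousAt_const.mul (continuousAt_const.sub
      (continuousAt_const.div (continuousAt_const.mul (continuousAt_id.pow 2)) (by positivity)))
  exact (continuousAt_rpow_const _ _ (Or.inr (by positivity))).comp hinner

end FirstIntegral

theorem stmt6_general (n : ℕ) (hn : 2 ≤ n) (w₀ : ℝ) (hw₀ : 0 < w₀)
    (W W' : ℝ → ℝ)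
    (hW' : ∀ s ∈ Ici (1:ℝ), HasDerivAt W (W' s) s)
    (hmono : MonotoneOn W (Ici 1))
    (hfirst : ∀ s ∈ Ici (1:ℝ),
      ((n:ℝ) - 1) / n * (W' s) ^ n + 1 / (2 * (W s) ^ 2) = 1 / (2 * w₀ ^ 2))
    (hinit : W 1 = w₀)
    (htop : Tendsto W atTop atTop) :
    Tendsto W' atTop (nhds (((n:ℝ) / (2 * ((n:ℝ) - 1) * w₀ ^ 2)) ^ (1 / (n:ℝ)))) ∧
      W' '' (Ici 1) = Ico 0 (((n:ℝ) / (2 * ((n:ℝ) - 1) * w₀ ^ 2)) ^ (1 / (n:ℝ))) := by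
  have hW_ge : ∀ s ∈ Ici (1:ℝ), w₀ ≤ W s := fun s hs => hinit ▸ hmono self_mem_Ici hs hs
  have hslope : ∀ s ∈ Ici (1:ℝ), W' s = firstIntegralSlope n w₀ (W s) := fun s hs =>
    eq_firstIntegralSlope hn ((hW' s hs).nonneg_of_monotoneOn_Ici hs hmono) (hfirst s hs)
  have hlim : Tendsto W' atTop (𝓝 (limitingSlope n w₀)) :=
    ((tendsto_firstIntegralSlope hn hw₀.ne').comp htop).congr'
      (eventually_ge_atTop 1 |>.mono fun s hs => (hslope s hs).symm)
  have hcont : ContinuousOn W' (Ici 1) := fun s hs =>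
    ((continuousAt_firstIntegralSlope (by omega) (hw₀.trans_le (hW_ge s hs)).ne').comp
      (hW' s hs).continuousAt).continuousWithinAt.congr hslope (hslope s hs)
  have hW'_one : W' 1 = 0 := by
    rw [hslope 1 self_mem_Ici, hinit, firstIntegralSlope_self (by omega)]
  refine ⟨hlim, hW'_one ▸ image_Ici_eq_Ico_of_tendsto hcont (fun s hs => ?_) (fun s hs => ?_) hlim⟩
  · exact hW'_one ▸ (hW' s hs).nonneg_of_monotoneOn_Ici hs hmono
  · exact hslope s hs ▸ firstIntegralSlope_lt hn hw₀ (hW_ge s hs)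

/-- for an increasing convex positive solution of the first integral
`((n-1)/n)(𝔴')ⁿ + 1/(2𝔴²) = 1/(2w₀²)` with `𝔴(1)=w₀>0` and `𝔴 → ∞`, one has
`𝔴' → p* = (n/(2(n-1)w₀²))^(1/n)` and `𝔴'([1,∞)) = [0, p*)`. -/
theorem stmt6 (n : ℕ) (hn : 2 ≤ n) (w₀ : ℝ) (hw₀ : 0 < w₀)
    (W W' : ℝ → ℝ)
    (hW' : ∀ s ∈ Ici (1:ℝ), HasDerivAt W (W' s) s)
    (hmono : MonotoneOn W (Ici 1))
    (hconv : ConvexOn ℝ (Ici 1) W)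
    (hpos : ∀ s ∈ Ici (1:ℝ), 0 < W s)
    (hfirst : ∀ s ∈ Ici (1:ℝ),
      ((n:ℝ) - 1) / n * (W' s) ^ n + 1 / (2 * (W s) ^ 2) = 1 / (2 * w₀ ^ 2))
    (hinit : W 1 = w₀)
    (htop : Tendsto W atTop atTop) :
    Tendsto W' atTop (nhds (((n:ℝ) / (2 * ((n:ℝ) - 1) * w₀ ^ 2)) ^ (1 / (n:ℝ)))) ∧
      W' '' (Ici 1) = Ico 0 (((n:ℝ) / (2 * ((n:ℝ) - 1) * w₀ ^ 2)) ^ (1 / (n:ℝ))) :=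
  stmt6_general n hn w₀ hw₀ W W' hW' hmono hfirst hinit htop
end

section
/- Let w : (0,2) → ℝ be positive and C² with w'' > 0 on a neighborhood of 1, suppose w solves w''(t)·w(t)³·(w(t)+(1-t)·w'(t))^(n-2) = 1/(n-1), and define w̃(t) = t·w(1/t). Then w = w̃ on a neighborhood of t = 1 if and only if w'(1) = w(1)/2. -/
open Real Set

set_option maxHeartbeats 1000000 in
/-- for a positive C² solution `w` of
`w'' w³ (w + (1-t) w')^(n-2) = 1/(n-1)` on `(0,2)` with `w'' > 0` near `1`, and
`w̃ t = t w(1/t)`, one has `w = w̃` near `t = 1` iff `w'(1) = w(1)/2`. -/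
theorem stmt14 (n : ℕ) (hn : 3 ≤ n) (w : ℝ → ℝ)
    (hw : ContDiffOn ℝ 2 w (Ioo 0 2))
    (hpos : ∀ t ∈ Ioo (0:ℝ) 2, 0 < w t)
    (hconv : ∀ᶠ t in nhds (1:ℝ), 0 < deriv (deriv w) t)
    (hode : ∀ t ∈ Ioo (0:ℝ) 2,
      deriv (deriv w) t * (w t) ^ 3 * (w t + (1 - t) * deriv w t) ^ (n - 2) =
        1 / ((n:ℝ) - 1)) :
    (∀ᶠ t in nhds (1:ℝ), w t = t * w (1 / t)) ↔ deriv w 1 = w 1 / 2 := by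
  have hO : IsOpen (Ioo (0:ℝ) 2) := isOpen_Ioo
  have h1mem : (1:ℝ) ∈ Ioo (0:ℝ) 2 := by norm_num
  -- derivative infrastructure
  have h2 : ContDiffOn ℝ ((1:ℕ∞) + 1) w (Ioo 0 2) := by
    norm_num; exact_mod_cast hw
  rw [contDiffOn_succ_iff_deriv_of_isOpen hO] at h2
  have hd1 : ∀ t ∈ Ioo (0:ℝ) 2, HasDerivAt w (deriv w t) t :=
    fun t ht => (h2.1 t ht).differentiableAt (hO.mem_nhds ht) |>.hasDerivAt
  have hd2 : ∀ t ∈ Ioo (0:ℝ) 2, HasDerivAt (deriv w) (deriv (deriv w) t) t :=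
    fun t ht => ((h2.2.2.differentiableOn one_ne_zero) t ht).differentiableAt (hO.mem_nhds ht) |>.hasDerivAt
  -- nonvanishing facts from the ODE
  have hcne : (1 : ℝ) / ((n:ℝ) - 1) ≠ 0 := by
    have h3 : (3:ℝ) ≤ (n:ℝ) := by exact_mod_cast hn
    have : (0:ℝ) < (n:ℝ) - 1 := by linarith
    positivity
  have hBne : ∀ t ∈ Ioo (0:ℝ) 2, w t + (1 - t) * deriv w t ≠ 0 := by
    intro t ht h
    apply hcne
    rw [← hode t ht, h]
    simp [zero_pow (by omega : n - 2 ≠ 0)]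
  have hwne : ∀ t ∈ Ioo (0:ℝ) 2, w t ≠ 0 := fun t ht => (hpos t ht).ne'
  have hw2ne : ∀ t ∈ Ioo (0:ℝ) 2, deriv (deriv w) t ≠ 0 := by
    intro t ht h
    apply hcne
    rw [← hode t ht, h, zero_mul, zero_mul]
  -- the second derivative formula
  have hw2eq : ∀ t ∈ Ioo (0:ℝ) 2, deriv (deriv w) t
      = 1 / (((n:ℝ) - 1) * (w t) ^ 3 * (w t + (1 - t) * deriv w t) ^ (n - 2)) := by
    intro t ht
    have h := hode t ht
    have hb := hBne t ht
    have hwn := hwne t ht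
    have hne : ((n:ℝ) - 1) ≠ 0 := by
      intro h'; exact hcne (by rw [h']; simp)
    field_simp at h ⊢
    linarith [h]
  -- the derivative at 1 of t ↦ t * w (1/t)
  have hnear : ∀ᶠ t in nhds (1:ℝ), t ∈ Ioo (0:ℝ) 2 ∧ (1/t) ∈ Ioo (0:ℝ) 2 := by
    have h1 : ∀ᶠ t in nhds (1:ℝ), t ∈ Ioo (0:ℝ) 2 := eventually_mem_nhds_iff.mpr (hO.mem_nhds h1mem) |>.mono (fun t ht => mem_of_mem_nhds ht)
    have hcont : ContinuousAt (fun t : ℝ => 1/t) 1 := by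
      apply ContinuousAt.div continuousAt_const continuousAt_id (by norm_num)
    have h2' : ∀ᶠ t in nhds (1:ℝ), (1/t) ∈ Ioo (0:ℝ) 2 := by
      have := hcont.preimage_mem_nhds (hO.mem_nhds (by norm_num : (1:ℝ)/1 ∈ Ioo (0:ℝ) 2))
      exact Filter.eventually_of_mem this (fun t ht => ht)
    exact h1.and h2'
  -- derivative of g1 t = t * w (1/t)
  have hg1deriv : ∀ t : ℝ, t ∈ Ioo (0:ℝ) 2 → (1/t) ∈ Ioo (0:ℝ) 2 →
      HasDerivAt (fun t : ℝ => t * w (1/t)) (w (1/t) - deriv w (1/t) / t) t := by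
    intro t ht hs
    have htne : t ≠ 0 := ne_of_gt ht.1
    have hinv : HasDerivAt (fun x : ℝ => 1/x) (-(1/t^2)) t := by
      simpa [one_div] using hasDerivAt_inv htne
    have hcomp : HasDerivAt (fun x : ℝ => w (1/x)) (deriv w (1/t) * (-(1/t^2))) t :=
      (hd1 _ hs).comp t hinv
    have := (hasDerivAt_id t).mul hcomp
    refine this.congr_deriv ?_
    simp only [id]
    field_simp
    ring
  -- derivative of g2 t = w (1/t) - deriv w (1/t) / t
  have hg2deriv : ∀ t : ℝ, t ∈ Ioo (0:ℝ) 2 → (1/t) ∈ Ioo (0:ℝ) 2 →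
      HasDerivAt (fun t : ℝ => w (1/t) - deriv w (1/t) / t)
        (deriv (deriv w) (1/t) / t^3) t := by
    intro t ht hs
    have htne : t ≠ 0 := ne_of_gt ht.1
    have hinv : HasDerivAt (fun x : ℝ => 1/x) (-(1/t^2)) t := by
      simpa [one_div] using hasDerivAt_inv htne
    have hA : HasDerivAt (fun x : ℝ => w (1/x)) (deriv w (1/t) * (-(1/t^2))) t :=
      (hd1 _ hs).comp t hinv
    have hB : HasDerivAt (fun x : ℝ => deriv w (1/x)) (deriv (deriv w) (1/t) * (-(1/t^2))) t :=
      (hd2 _ hs).comp t hinv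
    have hC : HasDerivAt (fun x : ℝ => deriv w (1/x) / x)
        ((deriv (deriv w) (1/t) * (-(1/t^2)) * t - deriv w (1/t) * 1) / t^2) t :=
      hB.div (hasDerivAt_id t) htne
    have := hA.sub hC
    refine this.congr_deriv ?_
    field_simp
    ring
  -- the vector field
  set v : ℝ → ℝ × ℝ → ℝ × ℝ := fun t p =>
    (p.2, 1 / (((n:ℝ) - 1) * p.1 ^ 3 * (p.1 + (1 - t) * p.2) ^ (n - 2))) with hv_def
  set q₀ : ℝ × ℝ × ℝ := (1, w 1, deriv w 1) with hq0_def
  -- the joint map is C¹ at q₀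
  have hV : ContDiffAt ℝ 1 (fun q : ℝ × ℝ × ℝ => v q.1 q.2) q₀ := by
    have hD : ContDiff ℝ 1 (fun q : ℝ × ℝ × ℝ =>
        ((n:ℝ) - 1) * q.2.1 ^ 3 * (q.2.1 + (1 - q.1) * q.2.2) ^ (n - 2)) := by
      fun_prop
    have hDne : ((n:ℝ) - 1) * (q₀.2.1) ^ 3 * (q₀.2.1 + (1 - q₀.1) * q₀.2.2) ^ (n - 2) ≠ 0 := by
      have hw1 : 0 < w 1 := hpos 1 h1mem
      have h3 : (3:ℝ) ≤ (n:ℝ) := by exact_mod_cast hn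
      have hn1 : (0:ℝ) < (n:ℝ) - 1 := by linarith
      simp only [hq0_def]
      have he : w 1 + (1 - (1:ℝ)) * deriv w 1 = w 1 := by ring
      rw [he]
      positivity
    exact (contDiff_snd.comp contDiff_snd).contDiffAt.prodMk
      (contDiffAt_const.div hD.contDiffAt hDne)
  obtain ⟨K, U, hU, hlip⟩ := hV.exists_lipschitzOnWith
  set s : ℝ → Set (ℝ × ℝ) := fun t => {p | (t, p) ∈ U} with hs_def
  have hvlip : ∀ t, LipschitzOnWith K (v t) (s t) := by
    intro t p hp q hq
    have := hlip hp hq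
    simpa [Prod.edist_eq] using this
  -- the two solutions
  set f : ℝ → ℝ × ℝ := fun t => (w t, deriv w t) with hf_def
  set g : ℝ → ℝ × ℝ := fun t => (t * w (1/t), w (1/t) - deriv w (1/t) / t) with hg_def
  -- f is a solution near 1
  have hfmem : ∀ᶠ t in nhds (1:ℝ), f t ∈ s t := by
    have hcont : ContinuousAt (fun t : ℝ => ((t, w t, deriv w t) : ℝ × ℝ × ℝ)) 1 :=
      continuousAt_id.prodMk ((hd1 1 h1mem).continuousAt.prodMk (hd2 1 h1mem).continuousAt)
    have := hcont.preimage_mem_nhds (by exact hU)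
    exact Filter.eventually_of_mem this (fun t ht => ht)
  have hfsol : ∀ᶠ t in nhds (1:ℝ), HasDerivAt f (v t (f t)) t ∧ f t ∈ s t := by
    filter_upwards [hnear, hfmem] with t ht hmem
    refine ⟨?_, hmem⟩
    have hder : HasDerivAt f (deriv w t, deriv (deriv w) t) t :=
      (hd1 t ht.1).prodMk (hd2 t ht.1)
    have hvft : v t (f t) = (deriv w t, deriv (deriv w) t) := by
      simp only [hv_def, hf_def]
      rw [← hw2eq t ht.1]
    rw [hvft]; exact hder
  -- g is a solution near 1: key ODE identity for g
  have hkey : ∀ t : ℝ, t ∈ Ioo (0:ℝ) 2 → (1/t) ∈ Ioo (0:ℝ) 2 →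
      v t (g t) = (w (1/t) - deriv w (1/t) / t, deriv (deriv w) (1/t) / t^3) := by
    intro t ht hs'
    have htne : t ≠ 0 := ne_of_gt ht.1
    have hw1 : w (1/t) ≠ 0 := hwne _ hs'
    have hB : w (1/t) + (1 - 1/t) * deriv w (1/t) ≠ 0 := hBne _ hs'
    have hn1 : ((n:ℝ) - 1) ≠ 0 := by
      have h3 : (3:ℝ) ≤ (n:ℝ) := by exact_mod_cast hn
      intro h'; linarith [h']
    simp only [hv_def, hg_def]
    refine Prod.ext rfl ?_
    simp only
    have harg : t * w (1/t) + (1 - t) * (w (1/t) - deriv w (1/t) / t)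
        = w (1/t) + (1 - 1/t) * deriv w (1/t) := by
      field_simp
      ring
    rw [harg, hw2eq (1/t) hs', mul_pow, div_div]
    congr 1
    ring
  have hgsol_deriv : ∀ t : ℝ, t ∈ Ioo (0:ℝ) 2 → (1/t) ∈ Ioo (0:ℝ) 2 →
      HasDerivAt g (v t (g t)) t := by
    intro t ht hs'
    rw [hkey t ht hs']
    exact (hg1deriv t ht hs').prodMk (hg2deriv t ht hs')
  -- now the two directions
  constructor
  · -- forward
    intro h
    have hg1 : HasDerivAt (fun t : ℝ => t * w (1/t)) (w (1/(1:ℝ)) - deriv w (1/(1:ℝ)) / 1) 1 :=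
      hg1deriv 1 h1mem (by norm_num)
    have hww : HasDerivAt w (w (1/(1:ℝ)) - deriv w (1/(1:ℝ)) / 1) 1 :=
      hg1.congr_of_eventuallyEq h
    have := hww.unique ((hd1 1 h1mem))
    norm_num at this
    linarith
  · -- backward
    intro hk
    have hgmem : ∀ᶠ t in nhds (1:ℝ), g t ∈ s t := by
      have hcg : ContinuousAt g 1 :=
        ((hg1deriv 1 h1mem (by norm_num)).continuousAt).prodMk
          ((hg2deriv 1 h1mem (by norm_num)).continuousAt)
      have hcont : ContinuousAt (fun t : ℝ => ((t, g t) : ℝ × (ℝ × ℝ))) 1 :=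
        continuousAt_id.prodMk hcg
      have hg1val : g 1 = (w 1, deriv w 1) := by
        simp only [hg_def, one_div, inv_one, one_mul, div_one, Prod.mk.injEq]
        refine ⟨by trivial, by linarith⟩
      have hq : (((1:ℝ), g 1) : ℝ × (ℝ × ℝ)) = q₀ := by rw [hg1val]
      have hU' : U ∈ nhds (((1:ℝ), g 1) : ℝ × (ℝ × ℝ)) := hq ▸ hU
      have hpre := hcont.preimage_mem_nhds hU'
      exact Filter.eventually_of_mem hpre (fun t ht => ht)
    have hgsol : ∀ᶠ t in nhds (1:ℝ), HasDerivAt g (v t (g t)) t ∧ g t ∈ s t := by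
      filter_upwards [hnear, hgmem] with t ht hmem
      exact ⟨hgsol_deriv t ht.1 ht.2, hmem⟩
    have heq : f 1 = g 1 := by
      simp only [hf_def, hg_def, one_div, inv_one, one_mul, div_one, Prod.mk.injEq]
      refine ⟨by trivial, by linarith⟩
    have huniq := ODE_solution_unique_of_eventually (Filter.Eventually.of_forall hvlip) hfsol hgsol heq
    filter_upwards [huniq] with t ht
    exact congrArg Prod.fst ht
end

section
/- Let u(x₁,x₂) = x₁^((n+2)/n)·v(x₂/x₁) with v C² on (0,∞). If v satisfies (v·v'' - (2/(n+2))·v'²)·((n+2)/n·v + (1-t)·v')^(n-2) = c for all t > 0, then u satisfies det(D²u)·(∂u/∂x₁ + ∂u/∂x₂)^(n-2) = (2(n+2)/n²)·c on the positive quadrant. -/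
open Real Set

/-- if `v` solves `(v v'' - (2/(n+2)) v'²)((n+2)/n v + (1-t)v')^(n-2) = c`
on `(0,∞)`, then `u(x₁,x₂) = x₁^((n+2)/n) v(x₂/x₁)` satisfies
`det(D²u) (∂u/∂x₁ + ∂u/∂x₂)^(n-2) = (2(n+2)/n²) c` on the positive quadrant. -/
theorem stmt18 (n : ℕ) (hn : 2 ≤ n) (c : ℝ) (v : ℝ → ℝ)
    (hv : ContDiffOn ℝ 2 v (Ioi 0))
    (u : ℝ → ℝ → ℝ)
    (hu : ∀ x₁ x₂, u x₁ x₂ = x₁ ^ (((n:ℝ) + 2) / n) * v (x₂ / x₁))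
    (hode : ∀ t ∈ Ioi (0:ℝ),
      (v t * deriv (deriv v) t - 2 / ((n:ℝ) + 2) * (deriv v t) ^ 2) *
        (((n:ℝ) + 2) / n * v t + (1 - t) * deriv v t) ^ (n - 2) = c) :
    ∀ x₁ > (0:ℝ), ∀ x₂ > (0:ℝ),
      (deriv (fun a => deriv (fun a' => u a' x₂) a) x₁ *
            deriv (fun b => deriv (fun b' => u x₁ b') b) x₂ -
          (deriv (fun a => deriv (fun b => u a b) x₂) x₁) ^ 2) *
        (deriv (fun a => u a x₂) x₁ + deriv (fun b => u x₁ b) x₂) ^ (n - 2) =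
      2 * ((n:ℝ) + 2) / (n:ℝ) ^ 2 * c := by
  have hnpos : (0:ℝ) < n := by exact_mod_cast (by omega : 0 < n)
  have hn0 : (n:ℝ) ≠ 0 := hnpos.ne'
  have hn2 : (n:ℝ) + 2 ≠ 0 := by positivity
  set p : ℝ := ((n:ℝ) + 2) / n with hpdef
  have hv1 : ∀ s : ℝ, 0 < s → HasDerivAt v (deriv v s) s := fun s hs =>
    ((hv.differentiableOn (by norm_num)).differentiableAt (Ioi_mem_nhds hs)).hasDerivAt
  have hdv : ContDiffOn ℝ 1 (deriv v) (Ioi 0) :=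
    hv.deriv_of_isOpen isOpen_Ioi (by norm_num)
  have hv2 : ∀ s : ℝ, 0 < s → HasDerivAt (deriv v) (deriv (deriv v) s) s := fun s hs =>
    ((hdv.differentiableOn (by norm_num)).differentiableAt (Ioi_mem_nhds hs)).hasDerivAt
  intro x₁ hx₁ x₂ hx₂
  have hq : ∀ a : ℝ, 0 < a → HasDerivAt (fun a' : ℝ => x₂ / a') (-(x₂ / a ^ 2)) a := by
    intro a ha
    have h := (hasDerivAt_inv ha.ne').const_mul x₂
    simpa [div_eq_mul_inv, mul_neg] using h
  have hD2 : ∀ a : ℝ, 0 < a → ∀ b : ℝ, 0 < b →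
      HasDerivAt (fun b' => u a b') (a ^ p * (deriv v (b / a) * a⁻¹)) b := by
    intro a ha b hb
    have h1 : HasDerivAt (fun b' : ℝ => b' / a) a⁻¹ b := by
      simpa using (hasDerivAt_id b).div_const a
    have h2 : HasDerivAt (fun b' => v (b' / a)) (deriv v (b / a) * a⁻¹) b :=
      (hv1 _ (div_pos hb ha)).comp b h1
    have h3 := h2.const_mul (a ^ p)
    have he : (fun b' => u a b') = fun b' => a ^ p * v (b' / a) :=
      funext fun b' => hu a b'
    rw [he]; exact h3
  have hD1 : ∀ a : ℝ, 0 < a →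
      HasDerivAt (fun a' => u a' x₂)
        (p * a ^ (p - 1) * v (x₂ / a) + a ^ p * (deriv v (x₂ / a) * -(x₂ / a ^ 2))) a := by
    intro a ha
    have hr : HasDerivAt (fun a' : ℝ => a' ^ p) (p * a ^ (p - 1)) a :=
      Real.hasDerivAt_rpow_const (Or.inl ha.ne')
    have hvc : HasDerivAt (fun a' => v (x₂ / a')) (deriv v (x₂ / a) * -(x₂ / a ^ 2)) a :=
      (hv1 _ (div_pos hx₂ ha)).comp a (hq a ha)
    have he : (fun a' => u a' x₂) = fun a' => a' ^ p * v (x₂ / a') :=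
      funext fun a' => hu a' x₂
    rw [he]; exact hr.mul hvc
  have e1 : x₁ ^ p = x₁ ^ (p - 1) * x₁ := by
    rw [← Real.rpow_add_one hx₁.ne']; congr 1; ring
  have e2 : x₁ ^ (p - 1) = x₁ ^ (p - 2) * x₁ := by
    rw [← Real.rpow_add_one hx₁.ne']; congr 1; ring
  have e3 : x₁ ^ (p - 1 - 1) = x₁ ^ (p - 2) := by congr 1; ring
  have hvc2 : HasDerivAt (fun a => deriv v (x₂ / a))
      (deriv (deriv v) (x₂ / x₁) * -(x₂ / x₁ ^ 2)) x₁ :=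
    (hv2 _ (div_pos hx₂ hx₁)).comp x₁ (hq x₁ hx₁)
  have hL2 : deriv (fun b => u x₁ b) x₂ = x₁ ^ (p - 1) * deriv v (x₂ / x₁) := by
    rw [(hD2 x₁ hx₁ x₂ hx₂).deriv, e1]
    field_simp
  have hL1 : deriv (fun a => u a x₂) x₁
      = x₁ ^ (p - 1) * (p * v (x₂ / x₁) - (x₂ / x₁) * deriv v (x₂ / x₁)) := by
    rw [(hD1 x₁ hx₁).deriv, e1]
    field_simp
    ring
  have hL22 : deriv (fun b => deriv (fun b' => u x₁ b') b) x₂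
      = x₁ ^ (p - 2) * deriv (deriv v) (x₂ / x₁) := by
    have heq : (fun b => deriv (fun b' => u x₁ b') b)
        =ᶠ[nhds x₂] fun b => x₁ ^ p * (deriv v (b / x₁) * x₁⁻¹) := by
      filter_upwards [Ioi_mem_nhds hx₂] with b hb
      exact (hD2 x₁ hx₁ b hb).deriv
    rw [heq.deriv_eq]
    have h1 : HasDerivAt (fun b : ℝ => b / x₁) x₁⁻¹ x₂ := by
      simpa using (hasDerivAt_id x₂).div_const x₁
    have h2 : HasDerivAt (fun b => deriv v (b / x₁))
        (deriv (deriv v) (x₂ / x₁) * x₁⁻¹) x₂ :=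
      (hv2 (x₂ / x₁) (div_pos hx₂ hx₁)).comp (h₂ := deriv v) x₂ h1
    have h3 := (h2.mul_const x₁⁻¹).const_mul (x₁ ^ p)
    rw [h3.deriv, e1, e2]
    field_simp
  have hL12 : deriv (fun a => deriv (fun b => u a b) x₂) x₁
      = x₁ ^ (p - 2) * ((p - 1) * deriv v (x₂ / x₁)
          - (x₂ / x₁) * deriv (deriv v) (x₂ / x₁)) := by
    have heq : (fun a => deriv (fun b => u a b) x₂)
        =ᶠ[nhds x₁] fun a => a ^ p * (deriv v (x₂ / a) * a⁻¹) := by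
      filter_upwards [Ioi_mem_nhds hx₁] with a ha
      exact (hD2 a ha x₂ hx₂).deriv
    rw [heq.deriv_eq]
    have hr : HasDerivAt (fun a : ℝ => a ^ p) (p * x₁ ^ (p - 1)) x₁ :=
      Real.hasDerivAt_rpow_const (Or.inl hx₁.ne')
    have hinv : HasDerivAt (fun a : ℝ => a⁻¹) (-(x₁ ^ 2)⁻¹) x₁ := hasDerivAt_inv hx₁.ne'
    have h3 := hr.fun_mul (hvc2.fun_mul hinv)
    rw [h3.deriv, e1, e2]
    field_simp
    ring
  have hL11 : deriv (fun a => deriv (fun a' => u a' x₂) a) x₁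
      = x₁ ^ (p - 2) * (p * (p - 1) * v (x₂ / x₁)
          - 2 * (p - 1) * (x₂ / x₁) * deriv v (x₂ / x₁)
          + (x₂ / x₁) ^ 2 * deriv (deriv v) (x₂ / x₁)) := by
    have heq : (fun a => deriv (fun a' => u a' x₂) a) =ᶠ[nhds x₁]
        fun a => p * a ^ (p - 1) * v (x₂ / a) + a ^ p * (deriv v (x₂ / a) * -(x₂ / a ^ 2)) := by
      filter_upwards [Ioi_mem_nhds hx₁] with a ha
      exact (hD1 a ha).deriv
    rw [heq.deriv_eq]
    have hr1 : HasDerivAt (fun a : ℝ => a ^ (p - 1)) ((p - 1) * x₁ ^ (p - 1 - 1)) x₁ :=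
      Real.hasDerivAt_rpow_const (Or.inl hx₁.ne')
    have hr : HasDerivAt (fun a : ℝ => a ^ p) (p * x₁ ^ (p - 1)) x₁ :=
      Real.hasDerivAt_rpow_const (Or.inl hx₁.ne')
    have hvc : HasDerivAt (fun a => v (x₂ / a)) (deriv v (x₂ / x₁) * -(x₂ / x₁ ^ 2)) x₁ :=
      (hv1 _ (div_pos hx₂ hx₁)).comp x₁ (hq x₁ hx₁)
    have hsq : HasDerivAt (fun a : ℝ => a ^ 2) (2 * x₁) x₁ := by
      simpa using hasDerivAt_pow 2 x₁
    have hneg : HasDerivAt (fun a : ℝ => -(x₂ / a ^ 2))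
        (-((0 * x₁ ^ 2 - x₂ * (2 * x₁)) / (x₁ ^ 2) ^ 2)) x₁ :=
      ((hasDerivAt_const x₁ x₂).div hsq (pow_ne_zero 2 hx₁.ne')).neg
    have hT1 := (hr1.const_mul p).fun_mul hvc
    have hT2 := hr.fun_mul (hvc2.fun_mul hneg)
    have h3 := hT1.fun_add hT2
    rw [h3.deriv, e3, e1, e2]
    field_simp
    ring
  rw [hL11, hL22, hL12, hL1, hL2]
  have hode' := hode (x₂ / x₁) (div_pos hx₂ hx₁)
  have hc2 : ((n - 2 : ℕ) : ℝ) = (n : ℝ) - 2 := by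
    push_cast [Nat.cast_sub hn]; ring
  have key : (x₁ ^ (p - 2)) ^ 2 * (x₁ ^ (p - 1)) ^ (n - 2) = 1 := by
    rw [← Real.rpow_natCast (x₁ ^ (p - 2)) 2, ← Real.rpow_natCast (x₁ ^ (p - 1)) (n - 2),
        ← Real.rpow_mul hx₁.le, ← Real.rpow_mul hx₁.le, ← Real.rpow_add hx₁, hc2]
    have h0 : (p - 2) * ((2:ℕ):ℝ) + (p - 1) * ((n:ℝ) - 2) = 0 := by
      rw [hpdef]; push_cast; field_simp; ring
    rw [h0, Real.rpow_zero]
  have hfac : (p * (p - 1) * v (x₂ / x₁)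
        - 2 * (p - 1) * (x₂ / x₁) * deriv v (x₂ / x₁)
        + (x₂ / x₁) ^ 2 * deriv (deriv v) (x₂ / x₁)) * deriv (deriv v) (x₂ / x₁)
      - ((p - 1) * deriv v (x₂ / x₁) - (x₂ / x₁) * deriv (deriv v) (x₂ / x₁)) ^ 2
      = (p - 1) * p * (v (x₂ / x₁) * deriv (deriv v) (x₂ / x₁)
          - 2 / ((n:ℝ) + 2) * deriv v (x₂ / x₁) ^ 2) := by
    rw [hpdef]; field_simp; ring
  have hS : x₁ ^ (p - 1) * (p * v (x₂ / x₁) - x₂ / x₁ * deriv v (x₂ / x₁))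
        + x₁ ^ (p - 1) * deriv v (x₂ / x₁)
      = x₁ ^ (p - 1) * (p * v (x₂ / x₁) + (1 - x₂ / x₁) * deriv v (x₂ / x₁)) := by ring
  rw [hS, mul_pow (x₁ ^ (p - 1)) (p * v (x₂ / x₁) + (1 - x₂ / x₁) * deriv v (x₂ / x₁)) (n - 2)]
  have hpp : (p - 1) * p = 2 * ((n:ℝ) + 2) / (n:ℝ) ^ 2 := by
    rw [hpdef]; field_simp; ring
  linear_combination
    ((x₁ ^ (p - 2)) ^ 2 * (x₁ ^ (p - 1)) ^ (n - 2)
        * (p * v (x₂ / x₁) + (1 - x₂ / x₁) * deriv v (x₂ / x₁)) ^ (n - 2)) * hfac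
      + ((p - 1) * p * (x₁ ^ (p - 2)) ^ 2 * (x₁ ^ (p - 1)) ^ (n - 2)) * hode'
      + ((p - 1) * p * c) * key + c * hpp
end
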